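/- arXiv:math/0701450 — 9 statements merged into one kernel-verified Lean document; each statement's English description precedes it below -/
import Mathlib

section
/- If Q is an orthogonal projection matrix whose diagonal entries all lie in [1/2 - δ, 1/2 + δ], and B = Q - D where D is the diagonal part of Q, then ‖B‖ ≤ (1 + 2δ)/2. -/
open Matrix

lemma diag_clm_norm_le {n : ℕ} (d : Fin n → ℂ) (δ : ℝ) (hδ0 : 0 ≤ δ)
    (hd : ∀ i, ‖d i‖ ≤ δ) :
    ‖Matrix.toEuclideanCLM (𝕜 := ℂ) (Matrix.diagonal d)‖ ≤ δ := by
  apply ContinuousLinearMap.opNorm_le_bound _ hδ0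
  intro x
  have hact : ∀ i, (Matrix.toEuclideanCLM (𝕜 := ℂ) (Matrix.diagonal d) x) i = d i * x i := by
    intro i
    have := Matrix.ofLp_toEuclideanCLM (𝕜 := ℂ) (Matrix.diagonal d) x
    have h2 := congrFun this i
    simpa [Matrix.mulVec_diagonal] using h2
  rw [EuclideanSpace.norm_eq, EuclideanSpace.norm_eq]
  have h1 : Real.sqrt (∑ i, ‖(Matrix.toEuclideanCLM (𝕜 := ℂ) (Matrix.diagonal d) x) i‖ ^ 2)
      ≤ Real.sqrt (∑ i, δ ^ 2 * ‖x i‖ ^ 2) := by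
    apply Real.sqrt_le_sqrt
    apply Finset.sum_le_sum
    intro i _
    rw [hact i, norm_mul, mul_pow]
    have h3 : ‖d i‖ ^ 2 ≤ δ ^ 2 := by
      have := hd i
      nlinarith [norm_nonneg (d i)]
    exact mul_le_mul_of_nonneg_right h3 (sq_nonneg _)
  calc _ ≤ Real.sqrt (∑ i, δ ^ 2 * ‖x i‖ ^ 2) := h1
    _ = δ * Real.sqrt (∑ i, ‖x i‖ ^ 2) := by
        rw [← Finset.mul_sum, Real.sqrt_mul (sq_nonneg δ), Real.sqrt_sq hδ0]

/-- If `Q` is an orthogonal projection whose diagonal entries lie in `[1/2 - δ, 1/2 + δ]`,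
and `B = Q - D` where `D` is the diagonal part of `Q`, then `‖B‖ ≤ (1 + 2δ)/2`. -/
theorem offdiagonal_norm_bound
    {n : ℕ} (Q : Matrix (Fin n) (Fin n) ℂ)
    (hQ : Q.IsHermitian) (hQ2 : Q * Q = Q)
    (δ : ℝ) (hδ0 : 0 ≤ δ) (hδ1 : δ ≤ 1 / 2)
    (hdiag : ∀ i, 1 / 2 - δ ≤ (Q i i).re ∧ (Q i i).re ≤ 1 / 2 + δ) :
    ‖Matrix.toEuclideanCLM (𝕜 := ℂ) (Q - Matrix.diagonal (fun i => Q i i))‖ ≤ (1 + 2 * δ) / 2 := by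
  have hreal : ∀ i, (Q i i).im = 0 := by
    intro i
    have := congrFun (congrFun hQ i) i
    have h2 : -(Q i i).im = (Q i i).im := by
      simpa [Matrix.conjTranspose_apply, Complex.ext_iff] using congrArg Complex.im this
    linarith
  have hdecomp : Q - Matrix.diagonal (fun i => Q i i)
      = (Q - (1/2 : ℂ) • 1) - Matrix.diagonal (fun i => Q i i - 1/2) := by
    ext i j
    by_cases h : i = j <;> simp [Matrix.diagonal, Matrix.one_apply, h] <;> ring
  rw [hdecomp, map_sub]
  set P := Matrix.toEuclideanCLM (𝕜 := ℂ) (Q - (1/2 : ℂ) • 1) with hP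
  have hmat : (Q - (1/2 : ℂ) • 1) * (Q - (1/2 : ℂ) • 1) = (1/4 : ℂ) • 1 := by
    rw [sub_mul, mul_sub, mul_sub, hQ2]
    simp only [smul_mul_assoc, mul_smul_comm, one_mul, mul_one, smul_smul]
    module
  have hPsq : P * P = (1/4 : ℂ) • 1 := by
    rw [hP, ← _root_.map_mul, hmat, _root_.map_smul, _root_.map_one]
  have hstarmat : star (Q - (1/2 : ℂ) • 1) = Q - (1/2 : ℂ) • 1 := by
    rw [star_sub, star_smul]
    have h1 : star Q = Q := hQ.eq
    rw [h1]
    norm_num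
  have hPstar : star P = P := by
    rw [hP, ← map_star, hstarmat]
  have h1 : ‖P‖ * ‖P‖ = ‖(1/4 : ℂ) • (1 : EuclideanSpace ℂ (Fin n) →L[ℂ] EuclideanSpace ℂ (Fin n))‖ := by
    rw [← CStarRing.norm_star_mul_self (x := P), hPstar, hPsq]
  have h2 : ‖(1/4 : ℂ) • (1 : EuclideanSpace ℂ (Fin n) →L[ℂ] EuclideanSpace ℂ (Fin n))‖ ≤ 1/4 := by
    have h3 := norm_smul (1/4 : ℂ) (1 : EuclideanSpace ℂ (Fin n) →L[ℂ] EuclideanSpace ℂ (Fin n))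
    rw [h3]
    have h4 : ‖(1 : EuclideanSpace ℂ (Fin n) →L[ℂ] EuclideanSpace ℂ (Fin n))‖ ≤ 1 :=
      ContinuousLinearMap.norm_id_le
    have hc : ‖(1/4 : ℂ)‖ = 1/4 := by norm_num
    rw [hc]
    nlinarith [norm_nonneg (1 : EuclideanSpace ℂ (Fin n) →L[ℂ] EuclideanSpace ℂ (Fin n))]
  have hPnorm : ‖P‖ ≤ 1/2 := by nlinarith [norm_nonneg P, h1 ▸ h2]
  have hDnorm : ‖Matrix.toEuclideanCLM (𝕜 := ℂ) (Matrix.diagonal (fun i => Q i i - 1/2))‖ ≤ δ := by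
    apply diag_clm_norm_le _ _ hδ0
    intro i
    have h1 : Q i i - 1/2 = (((Q i i).re - 1/2 : ℝ) : ℂ) := by
      rw [Complex.ext_iff]
      simp [hreal i]
    rw [h1, Complex.norm_real, Real.norm_eq_abs, abs_le]
    constructor <;> [linarith [(hdiag i).1]; linarith [(hdiag i).2]]
  calc ‖P - _‖ ≤ ‖P‖ + ‖Matrix.toEuclideanCLM (𝕜 := ℂ) (Matrix.diagonal (fun i => Q i i - 1/2))‖ :=
        norm_sub_le _ _
    _ ≤ 1/2 + δ := add_le_add hPnorm hDnorm
    _ = (1 + 2 * δ) / 2 := by ring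
end

section
/- If D is a d×d self-adjoint matrix with zero diagonal and all off-diagonal entries of modulus c, then ‖D‖ ≥ c√(d-1). -/
open Matrix

/-! A single column already forces the bound: if `e_j` is a standard basis vector, then
`‖D e_j‖² = ∑ i, ‖D i j‖² ≥ (d - 1) c²`, since `d - 1` entries of column `j` have modulus `c`. -/

namespace Matrix

variable {n 𝕜 : Type*} [Fintype n] [DecidableEq n] [RCLike 𝕜]

lemma sum_norm_sq_col_le_sq_norm_toEuclideanCLM (A : Matrix n n 𝕜) (j : n) :
    ∑ i, ‖A i j‖ ^ 2 ≤ ‖toEuclideanCLM (𝕜 := 𝕜) A‖ ^ 2 := by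
  have hcol := (toEuclideanCLM (𝕜 := 𝕜) A).le_opNorm (EuclideanSpace.single j 1)
  rw [PiLp.norm_single, norm_one, mul_one] at hcol
  calc ∑ i, ‖A i j‖ ^ 2 = ‖toEuclideanCLM (𝕜 := 𝕜) A (EuclideanSpace.single j 1)‖ ^ 2 := by
        simp [EuclideanSpace.norm_sq_eq]
    _ ≤ ‖toEuclideanCLM (𝕜 := 𝕜) A‖ ^ 2 := by gcongr

lemma card_sub_one_mul_sq_le_sum_norm_sq_col (A : Matrix n n 𝕜) (j : n) {c : ℝ}
    (hoff : ∀ i, i ≠ j → ‖A i j‖ = c) :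
    ((Fintype.card n : ℝ) - 1) * c ^ 2 ≤ ∑ i, ‖A i j‖ ^ 2 := by
  have hcard : ((Finset.univ.erase j).card : ℝ) = Fintype.card n - 1 := by
    rw [← Finset.card_univ, ← Finset.card_erase_add_one (Finset.mem_univ j)]
    push_cast
    ring
  calc ((Fintype.card n : ℝ) - 1) * c ^ 2 = ∑ i ∈ Finset.univ.erase j, ‖A i j‖ ^ 2 := by
        rw [Finset.sum_congr rfl fun i hi => by rw [hoff i (Finset.ne_of_mem_erase hi)],
          Finset.sum_const, nsmul_eq_mul, hcard]
    _ ≤ ∑ i, ‖A i j‖ ^ 2 :=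
        Finset.sum_le_sum_of_subset_of_nonneg (Finset.erase_subset j _) fun _ _ _ => by positivity

end Matrix

theorem norm_lower_bound_constant_modulus_general
    {d : ℕ} (D : Matrix (Fin d) (Fin d) ℂ)
    (c : ℝ) (hoff : ∀ i j, i ≠ j → ‖D i j‖ = c) :
    c * Real.sqrt ((d : ℝ) - 1) ≤ ‖Matrix.toEuclideanCLM (𝕜 := ℂ) D‖ := by
  rcases d.eq_zero_or_pos with rfl | hd
  · simp [Real.sqrt_eq_zero'.mpr (by norm_num : (-1 : ℝ) ≤ 0)]
  have hcol : ((d : ℝ) - 1) * c ^ 2 ≤ ‖toEuclideanCLM (𝕜 := ℂ) D‖ ^ 2 := by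
    have := card_sub_one_mul_sq_le_sum_norm_sq_col D ⟨0, hd⟩ fun i hi => hoff i _ hi
    rw [Fintype.card_fin] at this
    exact this.trans (sum_norm_sq_col_le_sq_norm_toEuclideanCLM D _)
  have hsq : (c * Real.sqrt ((d : ℝ) - 1)) ^ 2 ≤ ‖toEuclideanCLM (𝕜 := ℂ) D‖ ^ 2 := by
    rw [mul_pow, Real.sq_sqrt (by simp [Nat.one_le_cast.mpr hd]), mul_comm]
    exact hcol
  exact (abs_le_of_sq_le_sq' hsq (norm_nonneg _)).2

/-- If `D` is a `d × d` self-adjoint matrix with zero diagonal and all off-diagonal entries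
of modulus `c`, then `‖D‖ ≥ c √(d-1)`. -/
theorem norm_lower_bound_constant_modulus
    {d : ℕ} (D : Matrix (Fin d) (Fin d) ℂ)
    (hD : D.IsHermitian) (hdiag : ∀ i, D i i = 0)
    (c : ℝ) (hc : 0 ≤ c) (hoff : ∀ i j, i ≠ j → ‖D i j‖ = c) :
    c * Real.sqrt ((d : ℝ) - 1) ≤ ‖Matrix.toEuclideanCLM (𝕜 := ℂ) D‖ :=
  norm_lower_bound_constant_modulus_general D c hoff
end

section
/- For an orthogonal projection P ∈ M_n and any subset J ⊆ {1,...,n}, the dimension of span{P e_i : i ∈ J} is at least Σ_{i ∈ J} ‖P e_i‖^2. -/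
/-!
Let `V` be the span and `e i` the standard basis. Since `P` is a symmetric idempotent,
`‖P e i‖² = ⟪P e i, e i⟫ = ⟪P e i, P_V e i⟫ ≤ ‖P e i‖ ‖P_V e i‖` for `i ∈ J`, as `P e i ∈ V`.
Hence the sum is at most `∑ i, ‖P_V e i‖²`, which by Parseval is the trace of `P_V`, i.e. `dim V`.
-/

open Matrix

open scoped InnerProductSpace

section

variable {𝕜 E : Type*} [RCLike 𝕜] [NormedAddCommGroup E] [InnerProductSpace 𝕜 E]

theorem Submodule.norm_starProjection_sq_eq_sum {ι : Type*} [Fintype ι] {K : Submodule 𝕜 E}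
    [K.HasOrthogonalProjection] (c : OrthonormalBasis ι 𝕜 K) (x : E) :
    ‖K.starProjection x‖ ^ 2 = ∑ j, ‖⟪(c j : E), x⟫_𝕜‖ ^ 2 := by
  rw [K.starProjection_apply, K.norm_coe, ← c.sum_sq_norm_inner_right]
  simp only [Submodule.inner_orthogonalProjectionOnto_eq_of_mem_left]

theorem OrthonormalBasis.sum_norm_starProjection_sq {ι : Type*} [Fintype ι]
    (b : OrthonormalBasis ι 𝕜 E) (K : Submodule 𝕜 E) [FiniteDimensional 𝕜 K] :
    ∑ i, ‖K.starProjection (b i)‖ ^ 2 = Module.finrank 𝕜 K := by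
  let c := stdOrthonormalBasis 𝕜 K
  calc ∑ i, ‖K.starProjection (b i)‖ ^ 2
      = ∑ j, ∑ i, ‖⟪b i, (c j : E)⟫_𝕜‖ ^ 2 := by
        simp_rw [K.norm_starProjection_sq_eq_sum c, ← inner_conj_symm (b _), RCLike.norm_conj]
        exact Finset.sum_comm
    _ = ∑ j, ‖(c j : E)‖ ^ 2 := by simp_rw [b.sum_sq_norm_inner_right]
    _ = Module.finrank 𝕜 K := by simp [K.norm_coe, c.orthonormal.norm_eq_one]

theorem LinearMap.IsSymmetricProjection.inner_apply_self {T : E →ₗ[𝕜] E}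
    (hT : T.IsSymmetricProjection) (x : E) : ⟪T x, x⟫_𝕜 = (‖T x‖ : 𝕜) ^ 2 := by
  conv_lhs => rw [← hT.isIdempotentElem.eq, Module.End.mul_apply, hT.isSymmetric]
  exact inner_self_eq_norm_sq_to_K _

theorem LinearMap.IsSymmetricProjection.norm_apply_le_norm_starProjection {T : E →ₗ[𝕜] E}
    (hT : T.IsSymmetricProjection) {K : Submodule 𝕜 E} [K.HasOrthogonalProjection] {x : E}
    (hx : T x ∈ K) : ‖T x‖ ≤ ‖K.starProjection x‖ := by
  have key : ‖T x‖ ^ 2 ≤ ‖T x‖ * ‖K.starProjection x‖ :=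
    calc ‖T x‖ ^ 2 = ‖⟪T x, x⟫_𝕜‖ := by simp [hT.inner_apply_self]
      _ = ‖⟪T x, K.starProjection x⟫_𝕜‖ := by
        rw [← K.inner_starProjection_left_eq_right, K.starProjection_eq_self_iff.mpr hx]
      _ ≤ ‖T x‖ * ‖K.starProjection x‖ := norm_inner_le_norm _ _
  nlinarith [norm_nonneg (T x), norm_nonneg (K.starProjection x)]

end

theorem Matrix.isSymmetricProjection_toEuclideanLin {n : Type*} [Fintype n] [DecidableEq n]
    {𝕜 : Type*} [RCLike 𝕜] {P : Matrix n n 𝕜} (hP : P.IsHermitian) (hP2 : P * P = P) :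
    (toEuclideanLin P).IsSymmetricProjection where
  isIdempotentElem := by
    ext x : 1
    simp [Matrix.toLpLin_apply, Matrix.mulVec_mulVec, hP2]
  isSymmetric := isSymmetric_toEuclideanLin_iff.mpr hP

/-- For an orthogonal projection `P ∈ M_n(ℂ)` and any `J ⊆ {1,...,n}`, the dimension of the
span of `{P e_i : i ∈ J}` is at least `Σ_{i ∈ J} ‖P e_i‖²`. -/
theorem finrank_span_ge_sum_norm_sq
    {n : ℕ} (P : Matrix (Fin n) (Fin n) ℂ)
    (hP : P.IsHermitian) (hP2 : P * P = P)
    (J : Finset (Fin n))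
    (v : Fin n → EuclideanSpace ℂ (Fin n))
    (hv : ∀ i, v i = Matrix.toEuclideanLin P (EuclideanSpace.single i 1)) :
    ∑ i ∈ J, ‖v i‖ ^ 2 ≤
      (Module.finrank ℂ (Submodule.span ℂ (v '' (J : Set (Fin n)))) : ℝ) := by
  set V := Submodule.span ℂ (v '' (J : Set (Fin n)))
  have hT := isSymmetricProjection_toEuclideanLin hP hP2
  have hvV : ∀ i ∈ J, ‖v i‖ ≤ ‖V.starProjection (EuclideanSpace.single i 1)‖ := fun i hi => by
    have hmem : v i ∈ V := Submodule.subset_span ⟨i, hi, rfl⟩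
    rw [hv i] at hmem ⊢
    exact hT.norm_apply_le_norm_starProjection hmem
  calc ∑ i ∈ J, ‖v i‖ ^ 2
      ≤ ∑ i ∈ J, ‖V.starProjection (EuclideanSpace.single i 1)‖ ^ 2 :=
        Finset.sum_le_sum fun i hi => by gcongr; exact hvV i hi
    _ ≤ ∑ i, ‖V.starProjection (EuclideanSpace.single i 1)‖ ^ 2 :=
        Finset.sum_le_sum_of_subset_of_nonneg J.subset_univ fun _ _ _ => by positivity
    _ = Module.finrank ℂ V := by
        simpa using (EuclideanSpace.basisFun (Fin n) ℂ).sum_norm_starProjection_sq V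
end

section
/- Let P = [[a, b],[b, c]] be a nonzero 2×2 real orthogonal projection and S = diag(1, -1). Then ‖P S P‖ = |1 - 2c|. -/
set_option maxHeartbeats 1000000
set_option synthInstance.maxHeartbeats 400000


open Matrix

/-- If `P = [[a,b],[b,c]]` is a nonzero `2×2` real orthogonal projection and
`S = diag(1,-1)`, then `‖P S P‖ = |1 - 2c|`. -/
theorem two_by_two_PSP_norm
    (P : Matrix (Fin 2) (Fin 2) ℝ)
    (hP : P.IsHermitian) (hP2 : P * P = P) (hP0 : P ≠ 0)
    (S : Matrix (Fin 2) (Fin 2) ℝ) (hS : S = Matrix.diagonal ![1, -1]) :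
    ‖Matrix.toEuclideanCLM (𝕜 := ℝ) (P * S * P)‖ = |1 - 2 * P 1 1| := by
  set f := Matrix.toEuclideanCLM (𝕜 := ℝ) (n := Fin 2) with hf
  have hb : P 1 0 = P 0 1 := by
    have := congrFun (congrFun hP.symm 1) 0
    simpa [Matrix.conjTranspose_apply] using this
  have h00 : P 0 0 * P 0 0 + P 0 1 * P 0 1 = P 0 0 := by
    have := congrFun (congrFun hP2 0) 0
    simpa [Matrix.mul_apply, Fin.sum_univ_two, hb] using this
  have h01 : P 0 0 * P 0 1 + P 0 1 * P 1 1 = P 0 1 := by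
    have := congrFun (congrFun hP2 0) 1
    simpa [Matrix.mul_apply, Fin.sum_univ_two, hb] using this
  have h11 : P 0 1 * P 0 1 + P 1 1 * P 1 1 = P 1 1 := by
    have := congrFun (congrFun hP2 1) 1
    simpa [Matrix.mul_apply, Fin.sum_univ_two, hb] using this
  -- Either trace = 1 or P = 1
  have hcase : P 0 0 + P 1 1 = 1 ∨ P = 1 := by
    by_cases hbz : P 0 1 = 0
    · rw [hbz] at h00 h11
      simp only [mul_zero, zero_mul, zero_add, add_zero] at h00 h11
      have ha : P 0 0 = 0 ∨ P 0 0 = 1 := by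
        rcases mul_eq_zero.mp (show P 0 0 * (P 0 0 - 1) = 0 by nlinarith) with h | h
        · exact Or.inl h
        · right; linarith
      have hc : P 1 1 = 0 ∨ P 1 1 = 1 := by
        rcases mul_eq_zero.mp (show P 1 1 * (P 1 1 - 1) = 0 by nlinarith) with h | h
        · exact Or.inl h
        · right; linarith
      rcases ha with ha | ha <;> rcases hc with hc | hc
      · exfalso; apply hP0
        ext i j; fin_cases i <;> fin_cases j <;>
          simp_all
      · left; rw [ha, hc]; ring
      · left; rw [ha, hc]; ring
      · right
        ext i j; fin_cases i <;> fin_cases j <;>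
          simp_all [Matrix.one_apply]
    · left
      have h : P 0 1 * (P 0 0 + P 1 1 - 1) = 0 := by ring_nf; nlinarith [h01]
      rcases mul_eq_zero.mp h with h' | h'
      · exact absurd h' hbz
      · linarith
  rcases hcase with htr | hPone
  · -- rank one case: P * S * P = (1 - 2c) • P
    have key : P * S * P = (1 - 2 * P 1 1) • P := by
      subst hS
      ext i j
      fin_cases i <;> fin_cases j <;>
        · simp [Matrix.mul_apply, Fin.sum_univ_two, Matrix.diagonal_apply, hb,
            Matrix.smul_apply, smul_eq_mul]
          nlinarith [h00, h01, h11, htr]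
    rw [key, _root_.map_smul]
    rw [norm_smul (1 - 2 * P 1 1) (f P), Real.norm_eq_abs]
    have hnorm : ‖f P‖ = 1 := by
      have hstar : star (f P) = f P := by
        rw [← map_star]
        exact congrArg f hP
      have hsq : ‖f P‖ * ‖f P‖ = ‖f P‖ := by
        conv_lhs => rw [← CStarRing.norm_star_mul_self (x := f P)]
        rw [hstar, ← _root_.map_mul, hP2]
      have hne : ‖f P‖ ≠ 0 := by
        rw [norm_ne_zero_iff]
        intro h
        exact hP0 (f.injective (by simpa using h))
      have hsq' : ‖f P‖ * ‖f P‖ = 1 * ‖f P‖ := by rw [hsq, one_mul]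
      exact mul_right_cancel₀ hne hsq'
    rw [hnorm, mul_one]
  · -- P = 1 case
    subst hPone
    rw [one_mul, mul_one]
    have hc : (1 : Matrix (Fin 2) (Fin 2) ℝ) 1 1 = 1 := by simp
    rw [hc]
    norm_num
    have hSS : Sᴴ * S = 1 := by
      subst hS
      ext i j
      fin_cases i <;> fin_cases j <;>
        simp [Matrix.mul_apply, Fin.sum_univ_two, Matrix.diagonal_apply, Matrix.one_apply]
    have hsq : ‖f S‖ * ‖f S‖ = 1 := by
      rw [← CStarRing.norm_star_mul_self (x := f S), ← map_star, ← _root_.map_mul]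
      have : star S = Sᴴ := rfl
      rw [this, hSS, _root_.map_one, norm_one]
    nlinarith [norm_nonneg (f S), hsq]
end

section
/- Let P be an n×n orthogonal projection written in 2×2 block form P = [[A, B],[B*, C]] and let S = [[I, 0],[0, -I]] be the corresponding diagonal symmetry. Then ‖P S P‖ ≥ max{|1 - 2λ| : λ a nonzero eigenvalue of A or of C}. -/
/-!
Write `S = 2E - 1` with `E` the coordinate projection onto the first block. If `A x = μ x`
with `μ ≠ 0` and `u = (x, 0)`, then `E P u = μ u`, so `P u ≠ 0` and, as `P² = P`,
`P E P (P u) = P (E P u) = μ P u`. Hence `P S P = 2 P E P - P` has the eigenvector `P u` with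
eigenvalue `2μ - 1`, and every eigenvalue is bounded by the operator norm. The second block is
the same argument for `-S = 2F - 1` with `F` the projection onto the second block.
-/

open Matrix

namespace Matrix

theorem mem_spectrum_iff_exists_mulVec_eq_smul {K n : Type*} [Field K] [Fintype n]
    [DecidableEq n] {A : Matrix n n K} {μ : K} :
    μ ∈ spectrum K A ↔ ∃ v ≠ 0, A *ᵥ v = μ • v := by
  rw [← spectrum_toLin', ← Module.End.hasEigenvalue_iff_mem_spectrum,
    Module.End.hasEigenvalue_iff, Submodule.ne_bot_iff]
  simp only [Module.End.mem_eigenspace_iff, toLin'_apply]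
  exact exists_congr fun v => and_comm

theorem norm_le_norm_toEuclideanCLM_of_mem_spectrum {𝕜 n : Type*} [RCLike 𝕜] [Fintype n]
    [DecidableEq n] {M : Matrix n n 𝕜} {c : 𝕜} (hc : c ∈ spectrum 𝕜 M) :
    ‖c‖ ≤ ‖toEuclideanCLM (𝕜 := 𝕜) M‖ := by
  rw [← AlgEquiv.spectrum_eq (toEuclideanCLM (𝕜 := 𝕜) (n := n))] at hc
  exact (spectrum.norm_le_norm_mul_of_mem hc).trans
    (mul_le_of_le_one_right (norm_nonneg _) ContinuousLinearMap.norm_id_le)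

theorem compression_mulVec_eq_smul_of_isIdempotentElem {R n : Type*} [CommSemiring R]
    [Fintype n] {P E : Matrix n n R} (hP : IsIdempotentElem P) {u : n → R} {μ : R}
    (h : E *ᵥ P *ᵥ u = μ • u) : (P * E * P) *ᵥ P *ᵥ u = μ • P *ᵥ u := by
  have hPPu : P *ᵥ P *ᵥ u = P *ᵥ u := by rw [mulVec_mulVec, hP.eq]
  rw [← mulVec_mulVec, ← mulVec_mulVec, hPPu, h, mulVec_smul]

section Field

variable {K : Type*} [Field K]

theorem two_mul_sub_one_mem_spectrum_of_isIdempotentElem {n : Type*} [Fintype n]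
    [DecidableEq n] {P E : Matrix n n K} (hP : IsIdempotentElem P) {u : n → K} {μ : K}
    (hu : u ≠ 0) (hμ : μ ≠ 0) (h : E *ᵥ P *ᵥ u = μ • u) :
    2 * μ - 1 ∈ spectrum K (P * ((2 : K) • E - 1) * P) := by
  have hPu : P *ᵥ u ≠ 0 := by
    intro h0
    rw [h0, mulVec_zero, eq_comm, smul_eq_zero] at h
    exact h.elim hμ hu
  have hsplit : P * ((2 : K) • E - 1) * P = (2 : K) • (P * E * P) - P := by
    rw [mul_sub, sub_mul, mul_one, hP.eq, mul_smul_comm, smul_mul_assoc]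
  refine mem_spectrum_iff_exists_mulVec_eq_smul.2 ⟨P *ᵥ u, hPu, ?_⟩
  rw [hsplit, sub_mulVec, smul_mulVec, compression_mulVec_eq_smul_of_isIdempotentElem hP h,
    mulVec_mulVec, hP.eq]
  module

variable {m l : Type*} [Fintype m] [Fintype l] [DecidableEq m] [DecidableEq l]
  {P : Matrix (m ⊕ l) (m ⊕ l) K} {μ : K}

theorem two_mul_sub_one_mem_spectrum_of_mem_spectrum_toBlocks₁₁ (hP : IsIdempotentElem P)
    (hμ : μ ∈ spectrum K P.toBlocks₁₁) (hμ0 : μ ≠ 0) :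
    2 * μ - 1 ∈ spectrum K (P * fromBlocks 1 0 0 (-1) * P) := by
  obtain ⟨x, hx0, hx⟩ := mem_spectrum_iff_exists_mulVec_eq_smul.1 hμ
  have hS : (fromBlocks 1 0 0 (-1) : Matrix (m ⊕ l) (m ⊕ l) K) =
      (2 : K) • fromBlocks 1 0 0 0 - 1 := by
    rw [← fromBlocks_one, fromBlocks_smul, sub_eq_add_neg, fromBlocks_neg, fromBlocks_add]
    norm_num [two_smul]
  have hE : (fromBlocks 1 0 0 0 : Matrix (m ⊕ l) (m ⊕ l) K) *ᵥ P *ᵥ Sum.elim x 0 =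
      μ • Sum.elim x 0 := by
    rw [← fromBlocks_toBlocks P, fromBlocks_mulVec, fromBlocks_mulVec]
    ext (i | i) <;> simp [hx]
  rw [hS]
  exact two_mul_sub_one_mem_spectrum_of_isIdempotentElem hP
    (fun h => hx0 (funext fun i => congrFun h (Sum.inl i))) hμ0 hE

theorem one_sub_two_mul_mem_spectrum_of_mem_spectrum_toBlocks₂₂ (hP : IsIdempotentElem P)
    (hμ : μ ∈ spectrum K P.toBlocks₂₂) (hμ0 : μ ≠ 0) :
    1 - 2 * μ ∈ spectrum K (P * fromBlocks 1 0 0 (-1) * P) := by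
  obtain ⟨x, hx0, hx⟩ := mem_spectrum_iff_exists_mulVec_eq_smul.1 hμ
  have hS : (fromBlocks 1 0 0 (-1) : Matrix (m ⊕ l) (m ⊕ l) K) =
      -((2 : K) • fromBlocks 0 0 0 1 - 1) := by
    rw [← fromBlocks_one, fromBlocks_smul, sub_eq_add_neg, fromBlocks_neg, fromBlocks_add,
      fromBlocks_neg]
    norm_num [two_smul]
  have hF : (fromBlocks 0 0 0 1 : Matrix (m ⊕ l) (m ⊕ l) K) *ᵥ P *ᵥ Sum.elim (0 : m → K) x =
      μ • Sum.elim (0 : m → K) x := by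
    rw [← fromBlocks_toBlocks P, fromBlocks_mulVec, fromBlocks_mulVec]
    ext (i | i) <;> simp [hx]
  have h := two_mul_sub_one_mem_spectrum_of_isIdempotentElem hP
    (fun h => hx0 (funext fun i => congrFun h (Sum.inr i))) hμ0 hF
  rwa [hS, mul_neg, neg_mul, ← spectrum.neg_eq, Set.mem_neg, neg_sub]

end Field

end Matrix

theorem PSP_norm_ge_spectrum_bound_general
    {m l : ℕ} (P : Matrix (Fin m ⊕ Fin l) (Fin m ⊕ Fin l) ℂ)
    (hP2 : P * P = P)
    (S : Matrix (Fin m ⊕ Fin l) (Fin m ⊕ Fin l) ℂ)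
    (hS : S = Matrix.fromBlocks 1 0 0 (-1)) :
    ∀ μ : ℂ, (μ ∈ spectrum ℂ P.toBlocks₁₁ ∨ μ ∈ spectrum ℂ P.toBlocks₂₂) → μ ≠ 0 →
      ‖1 - 2 * μ‖ ≤ ‖Matrix.toEuclideanCLM (𝕜 := ℂ) (P * S * P)‖ := by
  intro μ hμ hμ0
  subst hS
  rcases hμ with hA | hC
  · rw [norm_sub_rev]
    exact norm_le_norm_toEuclideanCLM_of_mem_spectrum
      (two_mul_sub_one_mem_spectrum_of_mem_spectrum_toBlocks₁₁ hP2 hA hμ0)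
  · exact norm_le_norm_toEuclideanCLM_of_mem_spectrum
      (one_sub_two_mul_mem_spectrum_of_mem_spectrum_toBlocks₂₂ hP2 hC hμ0)

/-- For a projection `P = [[A,B],[B*,C]]` and the diagonal symmetry `S = [[I,0],[0,-I]]`,
`‖P S P‖` dominates `|1 - 2λ|` for every nonzero eigenvalue `λ` of `A` or of `C`. -/
theorem PSP_norm_ge_spectrum_bound
    {m l : ℕ} (P : Matrix (Fin m ⊕ Fin l) (Fin m ⊕ Fin l) ℂ)
    (hP : P.IsHermitian) (hP2 : P * P = P)
    (S : Matrix (Fin m ⊕ Fin l) (Fin m ⊕ Fin l) ℂ)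
    (hS : S = Matrix.fromBlocks 1 0 0 (-1)) :
    ∀ μ : ℂ, (μ ∈ spectrum ℂ P.toBlocks₁₁ ∨ μ ∈ spectrum ℂ P.toBlocks₂₂) → μ ≠ 0 →
      ‖1 - 2 * μ‖ ≤ ‖Matrix.toEuclideanCLM (𝕜 := ℂ) (P * S * P)‖ :=
  PSP_norm_ge_spectrum_bound_general P hP2 S hS
end

section
/- Let {f_1,...,f_n} be a uniform equiangular Parseval frame for ℂ^k with n > 2k and P = (⟨f_j, f_i⟩) its Gram matrix. If there exists a diagonal symmetry S (diagonal ±1 unitary) with ‖P S P‖ ≤ 2k/n, then (k-1)n^2 ≤ 4k^2(n-1). -/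
open Matrix
open scoped InnerProductSpace

/-! Write `D = diagonal s` and `d = k/n`. The sum `∑ s_i s_j |P_ij|² = trace (D P D P)` is
computed in two ways. Entrywise it equals `c² (∑ s_i)² + n (d² - c²) ≥ n (d² - c²)`.
Since `P` is an orthogonal projection it is also the squared Frobenius norm of
`PDP = PDP · P`, hence at most `‖PDP‖² ‖P‖_F² = ‖PDP‖² k ≤ 4k³/n²`.
The diagonal entries of `P = P²` give `d = d² + (n-1) c²`, and eliminating `c²` yields
`(k-1) n² ≤ 4k² (n-1)`. -/

namespace Matrix

variable {𝕜 : Type*} [RCLike 𝕜] {l m n : Type*} [Fintype l] [Fintype m] [Fintype n]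

lemma trace_conjTranspose_mul_self_eq_sum_norm_sq (A : Matrix m n 𝕜) :
    (Aᴴ * A).trace = ((∑ i, ∑ j, ‖A i j‖ ^ 2 : ℝ) : 𝕜) := by
  simp only [trace, diag, mul_apply, conjTranspose_apply, RCLike.star_def, RCLike.conj_mul]
  push_cast
  exact Finset.sum_comm

open scoped Matrix.Norms.L2Operator in
lemma sum_norm_sq_mul_le [DecidableEq m] (A : Matrix l m 𝕜) (B : Matrix m n 𝕜) :
    ∑ i, ∑ j, ‖(A * B) i j‖ ^ 2 ≤ ‖A‖ ^ 2 * ∑ i, ∑ j, ‖B i j‖ ^ 2 := by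
  rw [Finset.sum_comm, Finset.sum_comm (f := fun i j => ‖B i j‖ ^ 2), Finset.mul_sum]
  refine Finset.sum_le_sum fun j _ => ?_
  have hcol := A.l2_opNorm_mulVec ((EuclideanSpace.equiv m 𝕜).symm fun i => B i j)
  have := pow_le_pow_left₀ (norm_nonneg _) hcol 2
  rwa [mul_pow, EuclideanSpace.norm_sq_eq, EuclideanSpace.norm_sq_eq] at this

lemma isIdempotentElem_gram_transpose {E ι : Type*} [NormedAddCommGroup E]
    [InnerProductSpace 𝕜 E] [Fintype ι] {f : ι → E}
    (hf : ∀ x, ∑ i, ⟪f i, x⟫_𝕜 • f i = x) : IsIdempotentElem (gram 𝕜 f)ᵀ := by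
  ext i l
  simp only [mul_apply, transpose_apply, gram_apply]
  conv_rhs => rw [← hf (f i)]
  simp [inner_sum, inner_smul_right, mul_comm]

variable {P : Matrix n n 𝕜}

lemma IsHermitian.sum_norm_sq_row_eq (hH : P.IsHermitian) (hP : IsIdempotentElem P) (i : n) :
    ((∑ j, ‖P i j‖ ^ 2 : ℝ) : 𝕜) = P i i := by
  conv_rhs => rw [← hP.eq, mul_apply]
  push_cast
  refine Finset.sum_congr rfl fun j _ => ?_
  rw [← hH.apply j i, RCLike.star_def, RCLike.mul_conj]

variable [DecidableEq n]

lemma IsHermitian.sum_norm_sq_mul_diagonal_mul (hH : P.IsHermitian) (hP : IsIdempotentElem P)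
    (s : n → ℝ) :
    ∑ i, ∑ j, ‖(P * diagonal (fun i => (s i : 𝕜)) * P) i j‖ ^ 2 =
      ∑ i, ∑ j, s i * s j * ‖P i j‖ ^ 2 := by
  set D : Matrix n n 𝕜 := diagonal fun i => (s i : 𝕜)
  have hD : Dᴴ = D := by simp [D, diagonal_conjTranspose]
  apply RCLike.ofReal_injective (K := 𝕜)
  rw [← trace_conjTranspose_mul_self_eq_sum_norm_sq]
  have : (P * D * P)ᴴ * (P * D * P) = P * (D * P * D * P) := by
    simp only [conjTranspose_mul, hH.eq, hD, Matrix.mul_assoc]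
    rw [← Matrix.mul_assoc P P, hP.eq]
  rw [this, trace_mul_comm, Matrix.mul_assoc, hP.eq]
  simp only [trace, diag, mul_apply (M := D * P * D), D, diagonal_mul, mul_diagonal]
  push_cast
  refine Finset.sum_congr rfl fun i _ => Finset.sum_congr rfl fun j _ => ?_
  rw [← hH.apply j i, RCLike.star_def, ← RCLike.mul_conj]
  ring

open scoped Matrix.Norms.L2Operator in
lemma IsHermitian.sum_mul_mul_norm_sq_le (hH : P.IsHermitian) (hP : IsIdempotentElem P)
    (s : n → ℝ) :
    ∑ i, ∑ j, s i * s j * ‖P i j‖ ^ 2 ≤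
      ‖toEuclideanCLM (𝕜 := 𝕜) (P * diagonal (fun i => (s i : 𝕜)) * P)‖ ^ 2 *
        ∑ i, ∑ j, ‖P i j‖ ^ 2 := by
  set D : Matrix n n 𝕜 := diagonal fun i => (s i : 𝕜)
  calc ∑ i, ∑ j, s i * s j * ‖P i j‖ ^ 2 = ∑ i, ∑ j, ‖(P * D * P * P) i j‖ ^ 2 := by
        rw [Matrix.mul_assoc _ P P, hP.eq, hH.sum_norm_sq_mul_diagonal_mul hP]
    _ ≤ _ := sum_norm_sq_mul_le _ _

end Matrix

section SignedSums

variable {ι : Type*} [Fintype ι] [DecidableEq ι] {g : ι → ι → ℝ} {a b : ℝ}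

lemma sum_mul_eq_of_offDiag_eq {i : ι} (hd : g i i = a) (ho : ∀ j, j ≠ i → g i j = b)
    (s : ι → ℝ) : ∑ j, s j * g i j = b * ∑ j, s j + (a - b) * s i := by
  rw [← Finset.add_sum_erase _ _ (Finset.mem_univ i),
    ← Finset.add_sum_erase _ s (Finset.mem_univ i),
    Finset.sum_congr rfl fun j hj => by rw [ho j (Finset.ne_of_mem_erase hj)],
    ← Finset.sum_mul, hd]
  ring

lemma sum_sign_mul_sign_mul_eq_of_offDiag_eq {s : ι → ℝ} (hs : ∀ i, s i ^ 2 = 1)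
    (hd : ∀ i, g i i = a) (ho : ∀ i j, i ≠ j → g i j = b) :
    ∑ i, ∑ j, s i * s j * g i j = b * (∑ i, s i) ^ 2 + Fintype.card ι * (a - b) := by
  simp_rw [mul_assoc, ← Finset.mul_sum,
    sum_mul_eq_of_offDiag_eq (hd _) (fun j hj => ho _ j hj.symm), mul_add]
  have hsq : ∀ i, s i * ((a - b) * s i) = a - b := fun i => by linear_combination (a - b) * hs i
  simp only [Finset.sum_add_distrib, ← Finset.sum_mul, hsq, Finset.sum_const, Finset.card_univ,
    nsmul_eq_mul]
  ring

end SignedSums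

lemma sub_one_mul_sq_le {k n c N : ℝ} (hk : 0 < k) (hn : 1 ≤ n)
    (hrow : (k / n) ^ 2 + (n - 1) * c ^ 2 = k / n)
    (hF : n * ((k / n) ^ 2 - c ^ 2) ≤ N ^ 2 * k) (hN0 : 0 ≤ N) (hN : N ≤ 2 * k / n) :
    (k - 1) * n ^ 2 ≤ 4 * k ^ 2 * (n - 1) := by
  have hn0 : 0 < n := by linarith
  have hF' : (k / n) ^ 2 - c ^ 2 ≤ N ^ 2 * (k / n) := by
    rw [mul_div_assoc', le_div_iff₀ hn0]; linarith
  have hk1 : k - 1 ≤ (n - 1) * N ^ 2 := by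
    refine le_of_mul_le_mul_left ?_ (by positivity : 0 < k / n)
    calc k / n * (k - 1) = (n - 1) * ((k / n) ^ 2 - c ^ 2) := by
          field_simp at hrow ⊢; linear_combination hrow
      _ ≤ (n - 1) * (N ^ 2 * (k / n)) := by gcongr
      _ = k / n * ((n - 1) * N ^ 2) := by ring
  calc (k - 1) * n ^ 2 ≤ (n - 1) * N ^ 2 * n ^ 2 := by gcongr
    _ ≤ (n - 1) * (2 * k / n) ^ 2 * n ^ 2 := by gcongr
    _ = 4 * k ^ 2 * (n - 1) := by field_simp; ring

/-- If the Gram matrix `P` of a uniform equiangular Parseval frame of `n > 2k` vectors in `ℂ^k`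
satisfies `‖P S P‖ ≤ 2k/n` for some diagonal symmetry `S`, then `(k-1)n² ≤ 4k²(n-1)`. -/
theorem counterexample_conjectureA_bound
    (n k : ℕ) (hk : 0 < k) (hn : 2 * k < n)
    (f : Fin n → EuclideanSpace ℂ (Fin k))
    (hparseval : ∀ x : EuclideanSpace ℂ (Fin k), ∑ i, ⟪f i, x⟫_ℂ • f i = x)
    (huniform : ∀ i, ‖f i‖ ^ 2 = (k : ℝ) / n)
    (hequiangular : ∃ c : ℝ, ∀ i j, i ≠ j → ‖⟪f i, f j⟫_ℂ‖ = c)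
    (P : Matrix (Fin n) (Fin n) ℂ) (hP : P = Matrix.of fun i j => ⟪f j, f i⟫_ℂ)
    (hS : ∃ s : Fin n → ℝ, (∀ i, s i = 1 ∨ s i = -1) ∧
      ‖Matrix.toEuclideanCLM (𝕜 := ℂ)
        (P * Matrix.diagonal (fun i => (s i : ℂ)) * P)‖ ≤ 2 * (k : ℝ) / n) :
    ((k : ℝ) - 1) * (n : ℝ) ^ 2 ≤ 4 * (k : ℝ) ^ 2 * ((n : ℝ) - 1) := by
  obtain ⟨s, hs, hN⟩ := hS
  obtain ⟨c, hc⟩ := hequiangular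
  have hn0 : 0 < n := by omega
  have hPgram : P = (gram ℂ f)ᵀ := hP
  have hH : P.IsHermitian := hPgram ▸ (isHermitian_gram ℂ f).transpose
  have hI : IsIdempotentElem P := hPgram ▸ isIdempotentElem_gram_transpose hparseval
  have hdiag : ∀ i, P i i = ((k / n : ℝ) : ℂ) := fun i => by
    rw [hP, of_apply, inner_self_eq_norm_sq_to_K, ← RCLike.ofReal_pow, huniform]; rfl
  have hdiag_sq : ∀ i, ‖P i i‖ ^ 2 = ((k : ℝ) / n) ^ 2 := fun i => by
    rw [hdiag, Complex.norm_real, Real.norm_of_nonneg (by positivity)]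
  have hoff : ∀ i j, i ≠ j → ‖P i j‖ ^ 2 = c ^ 2 := fun i j hij => by
    rw [hP, of_apply, hc j i hij.symm]
  have hrow : ∀ i, ∑ j, ‖P i j‖ ^ 2 = (k : ℝ) / n := fun i =>
    RCLike.ofReal_injective ((hH.sum_norm_sq_row_eq hI i).trans (hdiag i))
  have hc2 : ((k : ℝ) / n) ^ 2 + (n - 1) * c ^ 2 = k / n := by
    have := sum_mul_eq_of_offDiag_eq (g := fun i j => ‖P i j‖ ^ 2) (hdiag_sq ⟨0, hn0⟩)
      (fun j hj => hoff _ j hj.symm) 1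
    simp only [Pi.one_apply, one_mul, Finset.sum_const, Finset.card_univ, Fintype.card_fin,
      nsmul_eq_mul, mul_one, hrow] at this
    linear_combination -this
  have hsign : ∀ i, s i ^ 2 = 1 := fun i => by rcases hs i with h | h <;> simp [h]
  have hF := hH.sum_mul_mul_norm_sq_le hI s
  simp only [sum_sign_mul_sign_mul_eq_of_offDiag_eq hsign hdiag_sq hoff, hrow, Finset.sum_const,
    Finset.card_univ, Fintype.card_fin, nsmul_eq_mul] at hF
  rw [mul_div_cancel₀ _ (by positivity)] at hF
  exact sub_one_mul_sq_le (by exact_mod_cast hk) (by exact_mod_cast hn0) hc2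
    ((le_add_of_nonneg_left (by positivity)).trans hF) (norm_nonneg _) hN
end

section
/- Let (a_{ij}) be an n×n symmetric matrix with non-negative entries and zero diagonal. For every r ∈ ℕ there is a partition {A_1,...,A_r} of {1,...,n} such that for every j, every i ∈ A_j, and every ℓ ≠ j: Σ_{m ∈ A_j} a_{im} ≤ Σ_{m ∈ A_ℓ} a_{im}. -/
/-- Berman–Halpern–Kaftal–Weiss: for a symmetric nonnegative matrix with zero diagonal and
any `r ≥ 1`, there is a partition of `{1,...,n}` into `r` sets such that for each index the
row sum over its own set is minimal among all sets of the partition. -/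
theorem BHKW_partition
    {n : ℕ} (a : Fin n → Fin n → ℝ)
    (hsymm : ∀ i j, a i j = a j i) (hnonneg : ∀ i j, 0 ≤ a i j)
    (hdiag : ∀ i, a i i = 0)
    (r : ℕ) (hr : 0 < r) :
    ∃ A : Fin r → Finset (Fin n),
      (∀ j l, j ≠ l → Disjoint (A j) (A l)) ∧ (∀ i : Fin n, ∃ j, i ∈ A j) ∧
      ∀ j l, l ≠ j → ∀ i ∈ A j, ∑ m ∈ A j, a i m ≤ ∑ m ∈ A l, a i m := by
  have hne : (Finset.univ : Finset (Fin n → Fin r)).Nonempty :=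
    ⟨fun _ => ⟨0, hr⟩, Finset.mem_univ _⟩
  obtain ⟨f, -, hf⟩ := Finset.exists_min_image (Finset.univ : Finset (Fin n → Fin r))
    (fun h => ∑ x : Fin n, ∑ y : Fin n, if h x = h y then a x y else 0) hne
  refine ⟨fun j => Finset.univ.filter (fun i => f i = j), ?_, ?_, ?_⟩
  · intro j l hjl
    simp only [Finset.disjoint_left, Finset.mem_filter, Finset.mem_univ, true_and]
    intro x hx hx'
    exact hjl (hx ▸ hx')
  · intro i
    exact ⟨f i, by simp⟩
  · intro j l hlj i hi
    simp only [Finset.mem_filter, Finset.mem_univ, true_and] at hi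
    by_contra hlt
    push_neg at hlt
    set g := Function.update f i l with hg
    set D : Fin n → Fin n → ℝ := fun x y =>
      (if f x = f y then a x y else 0) - (if g x = g y then a x y else 0) with hD
    have hgi : g i = l := Function.update_self i l f
    have hgne : ∀ y, y ≠ i → g y = f y := fun y hy => Function.update_of_ne hy l f
    have Dzero : ∀ x, x ≠ i → ∀ y, y ≠ i → D x y = 0 := by
      intro x hx y hy
      simp [hD, hgne x hx, hgne y hy]
    have Dsymm : ∀ x y, D x y = D y x := by
      intro x y
      simp only [hD, hsymm x y]
      congr 1 <;> exact if_congr eq_comm rfl rfl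
    have Dii : D i i = 0 := by simp [hD]
    have Diy : ∀ y, D i y =
        (if f y = j then a i y else 0) - (if f y = l then a i y else 0) := by
      intro y
      by_cases hy : y = i
      · subst hy
        simp [hD, hi, hdiag, (Ne.symm hlj : j ≠ l), hgi]
      · simp only [hD, hgne y hy, hgi, hi]
        congr 1 <;> exact if_congr eq_comm rfl rfl
    have hSum : ∀ y, D i y ≠ 0 → True := fun _ _ => trivial
    -- total difference
    have key : (∑ x : Fin n, ∑ y : Fin n, if f x = f y then a x y else 0)
        - (∑ x : Fin n, ∑ y : Fin n, if g x = g y then a x y else 0)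
        = 2 * ∑ y : Fin n, D i y := by
      have h1 : (∑ x : Fin n, ∑ y : Fin n, if f x = f y then a x y else 0)
          - (∑ x : Fin n, ∑ y : Fin n, if g x = g y then a x y else 0)
          = ∑ x : Fin n, ∑ y : Fin n, D x y := by
        rw [← Finset.sum_sub_distrib]
        refine Finset.sum_congr rfl fun x _ => ?_
        rw [← Finset.sum_sub_distrib]
      rw [h1]
      rw [← Finset.add_sum_erase _ _ (Finset.mem_univ i)]
      have h2 : ∀ x ∈ Finset.univ.erase i, (∑ y : Fin n, D x y) = D x i := by
        intro x hx
        have hxne : x ≠ i := Finset.ne_of_mem_erase hx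
        rw [← Finset.add_sum_erase _ _ (Finset.mem_univ i)]
        rw [Finset.sum_eq_zero fun y hy => Dzero x hxne y (Finset.ne_of_mem_erase hy)]
        ring
      rw [Finset.sum_congr rfl h2]
      have h3 : ∑ x ∈ Finset.univ.erase i, D x i = ∑ x ∈ Finset.univ.erase i, D i x :=
        Finset.sum_congr rfl fun x _ => Dsymm x i
      rw [h3, Finset.sum_erase_eq_sub (Finset.mem_univ i), Dii]
      ring
    have hS : ∑ y : Fin n, D i y
        = (∑ m ∈ Finset.univ.filter (fun m => f m = j), a i m)
          - (∑ m ∈ Finset.univ.filter (fun m => f m = l), a i m) := by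
      rw [Finset.sum_congr rfl fun y _ => Diy y, Finset.sum_sub_distrib,
        Finset.sum_filter, Finset.sum_filter]
    have hmin := hf g (Finset.mem_univ g)
    rw [hS] at key
    linarith
end

section
/- If {f_1,...,f_n} is a uniform Parseval frame for ℂ^k (so ‖f_i‖^2 = k/n for all i), then there is a partition {R, T} of {1,...,n} such that Σ_{i∈R} Σ_{j∈T} |⟨f_i, f_j⟩|^2 ≥ (k/4)(1 - k/n). -/
/-!
Averaging the cut weight `∑_{i ∈ S, j ∉ S} a i j` over all `2 ^ n` subsets `S` counts every
ordered pair `i ≠ j` in exactly a quarter of the subsets, so some cut carries at least a quarter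
of the off-diagonal mass of `a`. For `a i j = ‖⟪f i, f j⟫‖ ^ 2`, the Parseval identity makes every
column sum equal to `‖f j‖ ^ 2 = k / n` and every diagonal entry `(k / n) ^ 2`, so the
off-diagonal mass is `k - k ^ 2 / n`.
-/

open scoped InnerProductSpace
open Finset

section Cut

variable {ι : Type*} [Fintype ι] [DecidableEq ι]

def cutWeight (a : ι → ι → ℝ) (S : Finset ι) : ℝ :=
  ∑ i ∈ S, ∑ j ∈ Sᶜ, a i j

theorem card_filter_mem_and_notMem {i j : ι} (hij : i ≠ j) :
    #{S : Finset ι | i ∈ S ∧ j ∉ S} = #({i, j}ᶜ : Finset ι).powerset := by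
  refine card_nbij' (fun S => S.erase i) (insert i) ?_ ?_ ?_ ?_
  · intro S hS
    simp only [coe_filter, mem_univ, true_and, Set.mem_ofPred_eq] at hS
    simp only [coe_powerset, Set.mem_preimage, Set.mem_powerset_iff, coe_subset, subset_iff,
      mem_erase, mem_compl, mem_insert, mem_singleton, not_or]
    exact fun x hx => ⟨hx.1, fun hxj => hS.2 (hxj ▸ hx.2)⟩
  · intro T hT
    simp only [coe_powerset, Set.mem_preimage, Set.mem_powerset_iff, coe_subset, subset_iff,
      mem_compl, mem_insert, mem_singleton, not_or] at hT
    simp only [coe_filter, mem_univ, Set.mem_ofPred_eq, mem_insert_self, true_and, mem_insert,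
      not_or]
    exact ⟨hij.symm, fun hj => (hT hj).2 rfl⟩
  · intro S hS
    simp only [coe_filter, mem_univ, true_and, Set.mem_ofPred_eq] at hS
    exact insert_erase hS.1
  · intro T hT
    simp only [coe_powerset, Set.mem_preimage, Set.mem_powerset_iff, coe_subset] at hT
    exact erase_insert fun h => by simpa using hT h

theorem four_mul_card_filter_mem_and_notMem {i j : ι} (hij : i ≠ j) :
    4 * #{S : Finset ι | i ∈ S ∧ j ∉ S} = 2 ^ Fintype.card ι := by
  have hpair : #({i, j} : Finset ι) = 2 := card_pair hij
  have hle : 2 ≤ Fintype.card ι := hpair ▸ card_le_univ _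
  rw [card_filter_mem_and_notMem hij, card_powerset, card_compl, hpair]
  calc 4 * 2 ^ (Fintype.card ι - 2) = 2 ^ (Fintype.card ι - 2 + 2) := by ring
    _ = 2 ^ Fintype.card ι := by rw [Nat.sub_add_cancel hle]

theorem sum_cutWeight (a : ι → ι → ℝ) :
    ∑ S, cutWeight a S = 2 ^ Fintype.card ι / 4 * ∑ i, ∑ j ∈ univ.erase i, a i j := by
  have hcount (i j : ι) : ∑ S : Finset ι, (if i ∈ S ∧ j ∉ S then a i j else 0)
      = #{S : Finset ι | i ∈ S ∧ j ∉ S} * a i j := by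
    rw [← sum_filter, sum_const, nsmul_eq_mul]
  calc ∑ S, cutWeight a S
      = ∑ S : Finset ι, ∑ i, ∑ j, if i ∈ S ∧ j ∉ S then a i j else 0 := by
        simp only [cutWeight, ite_and, ← mem_compl, sum_ite_irrel, sum_const_zero, sum_ite_mem,
          univ_inter]
    _ = ∑ i, ∑ j, #{S : Finset ι | i ∈ S ∧ j ∉ S} * a i j := by
        rw [sum_comm]
        simp only [sum_comm (γ := Finset ι), hcount]
    _ = ∑ i, ∑ j ∈ univ.erase i, 2 ^ Fintype.card ι / 4 * a i j := by
        refine sum_congr rfl fun i _ => ?_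
        rw [← sum_erase univ (a := i) (by simp)]
        refine sum_congr rfl fun j hj => congrArg (· * a i j) ?_
        rw [eq_div_iff four_ne_zero, mul_comm]
        exact_mod_cast four_mul_card_filter_mem_and_notMem (ne_of_mem_erase hj).symm
    _ = _ := by simp only [← mul_sum]

theorem exists_le_cutWeight (a : ι → ι → ℝ) :
    ∃ S, (∑ i, ∑ j ∈ univ.erase i, a i j) / 4 ≤ cutWeight a S := by
  have havg : ∑ _S : Finset ι, (∑ i, ∑ j ∈ univ.erase i, a i j) / 4 = ∑ S, cutWeight a S := by
    rw [sum_cutWeight, sum_const, card_univ, Fintype.card_finset, nsmul_eq_mul]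
    push_cast
    ring
  obtain ⟨S, -, hS⟩ := exists_le_of_sum_le univ_nonempty havg.le
  exact ⟨S, hS⟩

end Cut

theorem sum_norm_inner_sq_eq_norm_sq {𝕜 E ι : Type*} [RCLike 𝕜] [NormedAddCommGroup E]
    [InnerProductSpace 𝕜 E] [Fintype ι] {f : ι → E}
    (hf : ∀ x, ∑ i, ⟪f i, x⟫_𝕜 • f i = x) (x : E) :
    ∑ i, ‖⟪f i, x⟫_𝕜‖ ^ 2 = ‖x‖ ^ 2 := by
  apply RCLike.ofReal_injective (K := 𝕜)
  calc ((∑ i, ‖⟪f i, x⟫_𝕜‖ ^ 2 : ℝ) : 𝕜) = ∑ i, ⟪f i, x⟫_𝕜 * ⟪x, f i⟫_𝕜 := by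
        push_cast
        simp only [← inner_conj_symm x, RCLike.mul_conj]
    _ = ⟪x, ∑ i, ⟪f i, x⟫_𝕜 • f i⟫_𝕜 := by simp only [inner_sum, inner_smul_right]
    _ = _ := by rw [hf, inner_self_eq_norm_sq_to_K]; push_cast; rfl

/-- For a uniform Parseval frame of `n` vectors in `ℂ^k`, there is a partition `{R, T}` of
`{1,...,n}` with `Σ_{i∈R} Σ_{j∈T} |⟨f_i, f_j⟩|² ≥ (k/4)(1 - k/n)`. -/
theorem uniform_frame_cross_energy
    (n k : ℕ) (hn : 0 < n)
    (f : Fin n → EuclideanSpace ℂ (Fin k))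
    (hparseval : ∀ x : EuclideanSpace ℂ (Fin k), ∑ i, ⟪f i, x⟫_ℂ • f i = x)
    (huniform : ∀ i, ‖f i‖ ^ 2 = (k : ℝ) / n) :
    ∃ R T : Finset (Fin n), Disjoint R T ∧ R ∪ T = Finset.univ ∧
      ((k : ℝ) / 4) * (1 - (k : ℝ) / n) ≤
        ∑ i ∈ R, ∑ j ∈ T, ‖⟪f i, f j⟫_ℂ‖ ^ 2 := by
  have hn' : (n : ℝ) ≠ 0 := by positivity
  set a : Fin n → Fin n → ℝ := fun i j => ‖⟪f i, f j⟫_ℂ‖ ^ 2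
  have hcol (j : Fin n) : ∑ i, a i j = k / n :=
    (sum_norm_inner_sq_eq_norm_sq hparseval (f j)).trans (huniform j)
  have hdiag (i : Fin n) : a i i = (k / n) ^ 2 := by
    simp [a, inner_self_eq_norm_sq_to_K, huniform]
  have hoff : ∑ i, ∑ j ∈ univ.erase i, a i j = k - k ^ 2 / n := by
    simp only [sum_erase_eq_sub (mem_univ _), sum_sub_distrib]
    rw [sum_comm]
    simp only [hcol, hdiag, sum_const, card_univ, Fintype.card_fin, nsmul_eq_mul]
    field_simp
  obtain ⟨S, hS⟩ := exists_le_cutWeight a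
  refine ⟨S, Sᶜ, disjoint_compl_right, union_compl S, le_of_eq_of_le ?_ hS⟩
  rw [hoff]
  field_simp
end

section
/- Let g, h ∈ L^∞[0,1] with 0 ≤ h ≤ 1, and suppose that for all continuous f_1, f_2 on [0,1], f_1 ≤ g ≤ f_2 a.e. implies f_1 ≤ 0 and f_2 ≥ 1. Then the map φ defined on the span of C[0,1] and g by φ(f + αg) = f + αh is well-defined and positive (i.e., f + αg ≥ 0 a.e. implies f + αh ≥ 0 a.e.). -/
open MeasureTheory Set

/-- If `g` satisfies: every continuous `f₁ ≤ g ≤ f₂` a.e. forces `f₁ ≤ 0` and `f₂ ≥ 1`, and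
`0 ≤ h ≤ 1` a.e., then the map `f + αg ↦ f + αh` is well defined (g is not a.e. equal to a
continuous function) and positive. -/
theorem positive_map_welldefined
    (g h : ℝ → ℝ)
    (hgbdd : ∃ M : ℝ, ∀ᵐ x ∂(volume.restrict (Icc (0:ℝ) 1)), |g x| ≤ M)
    (hh : ∀ᵐ x ∂(volume.restrict (Icc (0:ℝ) 1)), 0 ≤ h x ∧ h x ≤ 1)
    (hg : ∀ f₁ f₂ : ℝ → ℝ, ContinuousOn f₁ (Icc 0 1) → ContinuousOn f₂ (Icc 0 1) →
      (∀ᵐ x ∂(volume.restrict (Icc (0:ℝ) 1)), f₁ x ≤ g x ∧ g x ≤ f₂ x) →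
      ∀ x ∈ Icc (0:ℝ) 1, f₁ x ≤ 0 ∧ 1 ≤ f₂ x) :
    ((∀ f : ℝ → ℝ, ContinuousOn f (Icc 0 1) →
        ¬ (∀ᵐ x ∂(volume.restrict (Icc (0:ℝ) 1)), f x = g x)) ∧
      (∀ (f : ℝ → ℝ) (α : ℝ), ContinuousOn f (Icc 0 1) →
        (∀ᵐ x ∂(volume.restrict (Icc (0:ℝ) 1)), 0 ≤ f x + α * g x) →
        (∀ᵐ x ∂(volume.restrict (Icc (0:ℝ) 1)), 0 ≤ f x + α * h x))) := by
  obtain ⟨M, hM⟩ := hgbdd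
  constructor
  · intro f hfc hfg
    have := hg f f hfc hfc (hfg.mono fun x hx => ⟨hx.le, hx.ge⟩) 0 (by
      constructor <;> norm_num)
    linarith [this.1, this.2]
  · intro f α hfc hpos
    have hmem : ∀ᵐ x ∂(volume.restrict (Icc (0:ℝ) 1)), x ∈ Icc (0:ℝ) 1 :=
      ae_restrict_mem measurableSet_Icc
    rcases lt_trichotomy α 0 with hα | hα | hα
    · -- α < 0 : g ≤ f/(-α) a.e., so f ≥ -α on Icc
      have key := hg (fun _ => -M) (fun x => (-α)⁻¹ * f x)
        continuousOn_const (continuousOn_const.mul hfc)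
        ((hM.and hpos).mono fun x ⟨h1, h2⟩ => by
          constructor
          · show -M ≤ g x
            linarith [(abs_le.mp h1).1]
          · show g x ≤ (-α)⁻¹ * f x
            rw [le_inv_mul_iff₀ (by linarith : (0:ℝ) < -α)]
            nlinarith)
      filter_upwards [hh, hmem] with x hhx hx
      have hf : (1:ℝ) ≤ (-α)⁻¹ * f x := (key x hx).2
      rw [le_inv_mul_iff₀ (by linarith : (0:ℝ) < -α)] at hf
      nlinarith [hhx.1, hhx.2]
    · subst hα
      filter_upwards [hpos] with x hx
      simpa using by linarith [hx]
    · -- α > 0 : -f/α ≤ g a.e., so f ≥ 0 on Icc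
      have key := hg (fun x => -(α⁻¹ * f x)) (fun _ => M)
        (continuousOn_const.mul hfc).neg continuousOn_const
        ((hM.and hpos).mono fun x ⟨h1, h2⟩ => by
          constructor
          · show -(α⁻¹ * f x) ≤ g x
            rw [neg_le, le_inv_mul_iff₀ hα]
            nlinarith
          · exact (abs_le.mp h1).2)
      filter_upwards [hh, hmem] with x hhx hx
      have hf : -(α⁻¹ * f x) ≤ 0 := (key x hx).1
      have : 0 ≤ f x := by
        rw [neg_nonpos] at hf
        have := (le_inv_mul_iff₀ hα).mp hf
        linarith
      nlinarith [hhx.1]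
end
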